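/- For every integer b ≥ 1, every y ∈ ℤ and every α ≥ 0, the b-bit phase-quantizer transition probabilities evaluated at phase θ = π/2^b satisfy the reflection symmetry W_{(2^{b−1}−y) mod 2^b}^{(b)}(α, π/2^b) = W_{(2^{b−1}+y) mod 2^b}^{(b)}(α, π/2^b). -/

import Mathlib

/-!
The map `σ z = e^{2πi/2^b} z̄` is the reflection in the line through `e^{iπ/2^b}`. It is a
linear isometry fixing the mean `√α e^{iπ/2^b}`, so it preserves both Lebesgue measure and the
Gaussian density, and it reverses phases: `arg σ z ≡ 2π/2^b - arg z`. Off the null set of sector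
boundaries it therefore maps `R_k` onto `R_{-k mod 2^b}`, whence `W_{-y} = W_y` at `θ = π/2^b`.
The theorem follows because `2^{b-1} - y ≡ -(2^{b-1} + y) (mod 2^b)`.
-/

open MeasureTheory Real

noncomputable section

/-- Argument of a complex number taking values in `[0, 2π)`. -/
def arg2pi (z : ℂ) : ℝ := if 0 ≤ Complex.arg z then Complex.arg z else Complex.arg z + 2 * π

/-- The quantization sector `R_y` of a `b`-bit phase quantizer. -/
def sector (b y : ℕ) : Set ℂ :=
  {z : ℂ | z ≠ 0 ∧ 2 * π * y / 2 ^ b ≤ arg2pi z ∧ arg2pi z < 2 * π * (y + 1) / 2 ^ b}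

/-- Transition probability `W_y^{(b)}(α, θ)` of the `b`-bit phase-quantized Gaussian channel. -/
def W (b y : ℕ) (α θ : ℝ) : ℝ :=
  ∫ z in sector b y,
    (1 / π) *
      Real.exp (-(‖z - (Real.sqrt α : ℂ) * Complex.exp ((θ : ℂ) * Complex.I)‖ ^ 2))

/-- Transition probability with integer output index, understood modulo `2^b`. -/
def Wz (b : ℕ) (y : ℤ) (α θ : ℝ) : ℝ := W b ((y % (2 ^ b : ℤ)).toNat) α θ

/-- `x ↦ -x log₂ x`, with the convention `0 log₂ 0 = 0`. -/
def nH (x : ℝ) : ℝ := -(x * Real.logb 2 x)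

/-- Conditional output entropy `H(Y | U = √α e^{iθ})`. -/
def hEnt (b : ℕ) (α θ : ℝ) : ℝ := ∑ y ∈ Finset.range (2 ^ b), nH (W b y α θ)

/-- `W_y^{(b)}(u)` for a complex channel input `u`. -/
def Wu (b y : ℕ) (u : ℂ) : ℝ := W b y (‖u‖ ^ 2) (arg2pi u)

/-- Output probability `p_y` under input distribution `μ`. -/
def outP (b : ℕ) (μ : Measure ℂ) (y : ℕ) : ℝ := ∫ u, Wu b y u ∂μ

/-- Mutual information of the `b`-bit phase-quantized Gaussian channel with input law `μ`. -/
def mutInfo (b : ℕ) (μ : Measure ℂ) : ℝ :=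
  (∑ y ∈ Finset.range (2 ^ b), nH (outP b μ y)) -
    ∫ u, ∑ y ∈ Finset.range (2 ^ b), nH (Wu b y u) ∂μ

/-- Rotation of the complex plane by the angle `2π/2^b`. -/
def rot (b : ℕ) : ℂ → ℂ := fun u => Complex.exp (((2 * π / 2 ^ b : ℝ) : ℂ) * Complex.I) * u

/-- A measure on `ℂ` is `2π/2^b`-symmetric if it is invariant under rotation by `2π/2^b`. -/
def RotSymm (b : ℕ) (μ : Measure ℂ) : Prop := Measure.map (rot b) μ = μ

lemma arg2pi_zero : arg2pi 0 = 0 := by simp [arg2pi]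

lemma arg2pi_nonneg (z : ℂ) : 0 ≤ arg2pi z := by
  unfold arg2pi
  split_ifs with h
  · exact h
  · linarith [Complex.neg_pi_lt_arg z]

lemma arg2pi_lt (z : ℂ) : arg2pi z < 2 * π := by
  unfold arg2pi
  split_ifs with h
  · linarith [Complex.arg_le_pi z, pi_pos]
  · linarith [Complex.arg_le_pi z]

lemma coe_arg2pi (z : ℂ) : (arg2pi z : Real.Angle) = Complex.arg z := by
  unfold arg2pi
  split_ifs
  · rfl
  · rw [Real.Angle.coe_add, Real.Angle.coe_two_pi, add_zero]

lemma norm_mul_exp_arg2pi_mul_I (z : ℂ) :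
    (‖z‖ : ℂ) * Complex.exp (arg2pi z * Complex.I) = z := by
  unfold arg2pi
  split_ifs
  · exact Complex.norm_mul_exp_arg_mul_I z
  · push_cast
    rw [add_mul, Complex.exp_add, Complex.exp_two_pi_mul_I, mul_one,
      Complex.norm_mul_exp_arg_mul_I]

lemma volume_arg2pi_eq (c : ℝ) : volume {z : ℂ | arg2pi z = c} = 0 := by
  set v := Complex.exp (c * Complex.I)
  have hsub : {z : ℂ | arg2pi z = c} ⊆ (ℝ ∙ v : Submodule ℝ ℂ) := by
    rintro z rfl
    exact Submodule.mem_span_singleton.2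
      ⟨‖z‖, by rw [Complex.real_smul, norm_mul_exp_arg2pi_mul_I]⟩
  have hne : (ℝ ∙ v : Submodule ℝ ℂ) ≠ ⊤ := by
    intro h
    obtain ⟨r, hr⟩ :=
      Submodule.mem_span_singleton.1 (h ▸ Submodule.mem_top : Complex.I * v ∈ ℝ ∙ v)
    have : (r : ℂ) = Complex.I :=
      mul_right_cancel₀ (Complex.exp_ne_zero _) (by rwa [Complex.real_smul] at hr)
    simpa using congrArg Complex.im this
  exact measure_mono_null hsub (Measure.addHaar_submodule volume _ hne)

def scaledArg (b : ℕ) (z : ℂ) : ℝ := arg2pi z * 2 ^ b / (2 * π)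

lemma scaledArg_nonneg (b : ℕ) (z : ℂ) : 0 ≤ scaledArg b z := by
  have := arg2pi_nonneg z
  unfold scaledArg
  positivity

lemma scaledArg_lt (b : ℕ) (z : ℂ) : scaledArg b z < 2 ^ b := by
  rw [scaledArg, div_lt_iff₀ two_pi_pos, mul_comm]
  exact mul_lt_mul_of_pos_left (arg2pi_lt z) (by positivity)

lemma mem_sector_iff {b k : ℕ} {z : ℂ} :
    z ∈ sector b k ↔ z ≠ 0 ∧ ⌊scaledArg b z⌋ = k := by
  have hN : (0 : ℝ) < 2 ^ b := by positivity
  simp only [sector, Set.mem_ofPred_eq, Int.floor_eq_iff, scaledArg, Int.cast_natCast,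
    le_div_iff₀ two_pi_pos, div_lt_iff₀ two_pi_pos, div_le_iff₀ hN, lt_div_iff₀ hN]
  constructor <;> rintro ⟨h0, h1, h2⟩ <;> exact ⟨h0, by linarith, by linarith⟩

lemma mem_sector_toNat_emod_iff {b : ℕ} {y : ℤ} {z : ℂ} :
    z ∈ sector b (y % 2 ^ b).toNat ↔ z ≠ 0 ∧ ⌊scaledArg b z⌋ ≡ y [ZMOD 2 ^ b] := by
  have hN : (0 : ℤ) < 2 ^ b := by positivity
  have hfloor : ⌊scaledArg b z⌋ % 2 ^ b = ⌊scaledArg b z⌋ :=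
    Int.emod_eq_of_lt (Int.floor_nonneg.2 (scaledArg_nonneg b z))
      (Int.floor_lt.2 (by exact_mod_cast scaledArg_lt b z))
  rw [mem_sector_iff, Int.toNat_of_nonneg (Int.emod_nonneg y hN.ne'), Int.ModEq, hfloor]

def sectorRays (b : ℕ) : Set ℂ := ⋃ j : ℤ, {z | arg2pi z = j * (2 * π / 2 ^ b)}

lemma volume_sectorRays (b : ℕ) : volume (sectorRays b) = 0 :=
  measure_iUnion_null fun _ => volume_arg2pi_eq _

/-- The reflection in the line through `e^{iπ/2^b}`, the bisector of `R_0`. -/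
def sectorReflection (b : ℕ) : ℂ ≃ₗᵢ[ℝ] ℂ :=
  Complex.conjLIE.trans (rotation (Circle.exp (2 * π / 2 ^ b)))

lemma sectorReflection_apply (b : ℕ) (z : ℂ) :
    sectorReflection b z =
      Complex.exp ((2 * π / 2 ^ b : ℝ) * Complex.I) * (starRingEnd ℂ) z := by
  simp [sectorReflection, rotation_apply, Circle.coe_exp]

lemma sectorReflection_fixed (b : ℕ) (r : ℝ) :
    sectorReflection b (r * Complex.exp ((π / 2 ^ b : ℝ) * Complex.I)) =
      r * Complex.exp ((π / 2 ^ b : ℝ) * Complex.I) := by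
  rw [sectorReflection_apply, map_mul, Complex.conj_ofReal, ← Complex.exp_conj, map_mul,
    Complex.conj_ofReal, Complex.conj_I, mul_left_comm, ← Complex.exp_add]
  congr 2
  push_cast
  ring

lemma coe_arg2pi_sectorReflection {b : ℕ} {z : ℂ} (hz : z ≠ 0) :
    (arg2pi (sectorReflection b z) : Real.Angle) = (2 * π / 2 ^ b - arg2pi z : ℝ) := by
  rw [coe_arg2pi, sectorReflection_apply,
    Complex.arg_mul_coe_angle (Complex.exp_ne_zero _) (by simpa using hz),
    Complex.arg_conj_coe_angle, ← coe_arg2pi z, Complex.arg_exp_mul_I, Real.Angle.coe_toIocMod,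
    Real.Angle.coe_sub, sub_eq_add_neg]

lemma floor_scaledArg_sectorReflection {b : ℕ} {z : ℂ} (hz : z ∉ sectorRays b) :
    ⌊scaledArg b (sectorReflection b z)⌋ ≡ -⌊scaledArg b z⌋ [ZMOD 2 ^ b] := by
  have hz0 : z ≠ 0 := by
    rintro rfl
    exact hz (Set.mem_iUnion.2 ⟨0, by simp [arg2pi_zero]⟩)
  have hnint : scaledArg b z ∉ Set.range Int.cast := by
    rintro ⟨j, hj⟩
    refine hz (Set.mem_iUnion.2 ⟨j, ?_⟩)
    simp only [Set.mem_ofPred_eq, hj, scaledArg]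
    field_simp
  obtain ⟨m, hm⟩ := Real.Angle.angle_eq_iff_two_pi_dvd_sub.1 (coe_arg2pi_sectorReflection hz0)
  have hq :
      scaledArg b (sectorReflection b z) = ((1 + m * 2 ^ b : ℤ) : ℝ) + -scaledArg b z := by
    rw [scaledArg, scaledArg, eq_add_of_sub_eq hm]
    field_simp
    push_cast
    ring
  -- `⌊-x⌋ = -⌊x⌋ - 1` since `x` is not an integer
  rw [hq, Int.floor_intCast_add, Int.floor_neg,
    Int.ceil_eq_floor_add_one_iff_notMem _ |>.2 hnint]
  exact Int.modEq_iff_dvd.2 ⟨-m, by ring⟩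

lemma sectorReflection_preimage_sector_ae_eq (b : ℕ) (y : ℤ) :
    sectorReflection b ⁻¹' sector b ((-y) % 2 ^ b).toNat =ᵐ[volume]
      sector b (y % 2 ^ b).toNat := by
  rw [Filter.eventuallyEq_set]
  filter_upwards [measure_eq_zero_iff_ae_notMem.1 (volume_sectorRays b)] with z hz
  have hfloor := floor_scaledArg_sectorReflection hz
  rw [Set.mem_preimage, mem_sector_toNat_emod_iff, mem_sector_toNat_emod_iff,
    map_ne_zero_iff _ (sectorReflection b).injective]
  exact and_congr Iff.rfl ⟨fun h => Int.neg_modEq_neg.1 (hfloor.symm.trans h),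
    fun h => hfloor.trans (Int.neg_modEq_neg.2 h)⟩

lemma norm_sectorReflection_sub (b : ℕ) (r : ℝ) (z : ℂ) :
    ‖sectorReflection b z - r * Complex.exp ((π / 2 ^ b : ℝ) * Complex.I)‖ =
      ‖z - r * Complex.exp ((π / 2 ^ b : ℝ) * Complex.I)‖ := by
  rw [← sectorReflection_fixed b r, ← map_sub, LinearIsometryEquiv.norm_map,
    sectorReflection_fixed]

lemma Wz_neg (b : ℕ) (y : ℤ) (α : ℝ) :
    Wz b (-y) α (π / 2 ^ b) = Wz b y α (π / 2 ^ b) := by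
  have hmp := (sectorReflection b).measurePreserving
  have hemb := (sectorReflection b).toHomeomorph.measurableEmbedding
  rw [Wz, Wz, W, W, ← hmp.setIntegral_preimage_emb hemb,
    setIntegral_congr_set (sectorReflection_preimage_sector_ae_eq b y)]
  simp only [norm_sectorReflection_sub]

lemma Wz_congr {b : ℕ} {y y' : ℤ} (h : y ≡ y' [ZMOD 2 ^ b]) (α θ : ℝ) :
    Wz b y α θ = Wz b y' α θ := by
  rw [Wz, Wz, h]

theorem stmt_1_general (b : ℕ) (y : ℤ) (α : ℝ) :
    Wz b ((2 : ℤ) ^ (b - 1) - y) α (π / 2 ^ b) =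
      Wz b ((2 : ℤ) ^ (b - 1) + y) α (π / 2 ^ b) := by
  have h : (2 : ℤ) ^ (b - 1) - y ≡ -((2 : ℤ) ^ (b - 1) + y) [ZMOD 2 ^ b] := by
    refine Int.ModEq.symm (Int.modEq_iff_dvd.2 ?_)
    rw [show (2 : ℤ) ^ (b - 1) - y - -(2 ^ (b - 1) + y) = 2 ^ (b - 1 + 1) by ring]
    exact pow_dvd_pow 2 (by omega)
  rw [Wz_congr h, Wz_neg]

/-- reflection symmetry of the transition probabilities at `θ = π/2^b`. -/
theorem stmt_1 (b : ℕ) (hb : 1 ≤ b) (y : ℤ) (α : ℝ) (hα : 0 ≤ α) :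
    Wz b ((2 : ℤ) ^ (b - 1) - y) α (π / 2 ^ b) =
      Wz b ((2 : ℤ) ^ (b - 1) + y) α (π / 2 ^ b) :=
  stmt_1_general b y α

end
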